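/- arXiv:1610.04122 — 2 statements merged into one kernel-verified Lean document; each statement's English description precedes it below -/
import Mathlib

section
/- There is a bijection between B_n and the set C_{n+1} of sequences a_1,...,a_{2n+2} with n+1 entries equal to 1 and n+1 entries equal to -1 such that every partial sum a_1 + ... + a_l is nonnegative. -/
open Finset

/-- `f : Fin n → Option (Fin n)` represents an injective partial map of `{1,…,n}`
(elements 0-indexed): `f a = some x` means `a ∈ D(f)` with image `x`. Injectivity: -/
def IsPartialInj {n : ℕ} (f : Fin n → Option (Fin n)) : Prop :=
  ∀ a b x, f a = some x → f b = some x → a = b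

/-- order preserving: `a < b` in the domain implies `f a < f b`. -/
def IsOrderPres {n : ℕ} (f : Fin n → Option (Fin n)) : Prop :=
  ∀ a b x y, a < b → f a = some x → f b = some y → x < y

/-- order decreasing: `f a ≤ a` on the domain. -/
def IsOrderDec {n : ℕ} (f : Fin n → Option (Fin n)) : Prop :=
  ∀ a x, f a = some x → x ≤ a

/-- The planar upper triangular rook monoid `B_n`: order-preserving,
order-decreasing injective partial maps of `{1,…,n}`. -/
def Bn (n : ℕ) : Set (Fin n → Option (Fin n)) :=
  {f | IsPartialInj f ∧ IsOrderPres f ∧ IsOrderDec f}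

/-- `C_m`: sequences of length `2m` with `m` entries `1` and `m` entries `-1`,
all of whose partial sums are nonnegative. -/
def CSeq (m : ℕ) : Set (Fin (2 * m) → ℤ) :=
  {a | (∀ i, a i = 1 ∨ a i = -1) ∧
    (Finset.univ.filter (fun i => a i = 1)).card = m ∧
    ∀ l, 0 ≤ ∑ i ∈ Finset.univ.filter (fun i => i ≤ l), a i}

/-!
An element of `B_n` is the order isomorphism between its domain `D` and its range `R`, and it is
order-decreasing iff `R` lies below `D` in the Gale order. Encode `(D, R)` by the word
`+1, r₀, d₀, …, r_{n-1}, d_{n-1}, -1` with `r_j = +1` iff `j ∈ R` and `d_j = -1` iff `j ∈ D`.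
Its partial sum after `2j+1` letters is `1 + 2 (#{r ∈ R | r < j} - #{d ∈ D | d < j})`, and the
partial sum after `2j+2` letters differs from it by one, so the word is a ballot word iff
`#R = #D` and `R` lies below `D` in the Gale order.
-/

section Gale

variable {α β : Type*} [LinearOrder α] [LinearOrder β]

theorem forall_le_iff_forall_card_filter_lt_le {k : ℕ} {u v : Fin k → α} (hu : StrictMono u)
    (hv : Monotone v) : (∀ i, u i ≤ v i) ↔ ∀ x, #{i | v i < x} ≤ #{i | u i < x} := by
  refine ⟨fun h x => card_le_card fun i => ?_, fun h i => ?_⟩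
  · simp only [mem_filter, mem_univ, true_and]
    exact (h i).trans_lt
  · by_contra! hlt
    have hu_lt : ({i' | u i' < u i} : Finset (Fin k)) = Iio i := by
      ext i'
      simp [hu.lt_iff_lt]
    have hv_lt : Iic i ⊆ ({i' | v i' < u i} : Finset (Fin k)) := fun i' hi' => by
      simp only [mem_filter, mem_univ, true_and]
      exact (hv (mem_Iic.mp hi')).trans_lt hlt
    have := (card_le_card hv_lt).trans (h (u i))
    rw [hu_lt, Fin.card_Iic, Fin.card_Iio] at this
    omega

/-- The Gale order on finsets of equal size: equivalently, the `i`-th smallest element of `s`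
is at most the `i`-th smallest element of `t` for every `i`. -/
def GaleLE (s t : Finset α) : Prop :=
  #s = #t ∧ ∀ x, #{a ∈ t | a < x} ≤ #{a ∈ s | a < x}

theorem card_filter_lt_eq_card_filter_orderEmbOfFin_lt (s : Finset α) {k : ℕ} (h : #s = k)
    (x : α) : #{a ∈ s | a < x} = #{i | s.orderEmbOfFin h i < x} := by
  conv_lhs => rw [← s.map_orderEmbOfFin_univ h]
  rw [filter_map, card_map]
  rfl

theorem galeLE_iff_orderEmbOfFin_le {s t : Finset α} {k : ℕ} (hs : #s = k) (ht : #t = k) :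
    GaleLE s t ↔ ∀ i, s.orderEmbOfFin hs i ≤ t.orderEmbOfFin ht i := by
  simp only [GaleLE, hs, ht, true_and, card_filter_lt_eq_card_filter_orderEmbOfFin_lt _ hs,
    card_filter_lt_eq_card_filter_orderEmbOfFin_lt _ ht]
  exact (forall_le_iff_forall_card_filter_lt_le (s.orderEmbOfFin hs).strictMono
    (t.orderEmbOfFin ht).monotone).symm

theorem orderEmbOfFin_map (e : α ↪o β) (s : Finset α) {k : ℕ} (h : #s = k) (i : Fin k) :
    (s.map e.toEmbedding).orderEmbOfFin ((card_map _).trans h) i = e (s.orderEmbOfFin h i) :=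
  (congrFun (orderEmbOfFin_unique _ (fun i => mem_map_of_mem _ (orderEmbOfFin_mem s h i))
    (e.strictMono.comp (s.orderEmbOfFin h).strictMono)) i).symm

theorem galeLE_map_iff (e : α ↪o β) {s t : Finset α} :
    GaleLE (s.map e.toEmbedding) (t.map e.toEmbedding) ↔ GaleLE s t := by
  by_cases h : #s = #t
  · rw [galeLE_iff_orderEmbOfFin_le ((card_map _).trans h) (card_map _),
      galeLE_iff_orderEmbOfFin_le h rfl]
    simp only [orderEmbOfFin_map e s h, orderEmbOfFin_map e t rfl, e.le_iff_le]
  · exact iff_of_false (fun hm => h (by simpa using hm.1)) (fun h' => h h'.1)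

end Gale

namespace Bn

variable {n : ℕ}

def dom (f : Fin n → Option (Fin n)) : Finset (Fin n) := {a | (f a).isSome}

def ran (f : Fin n → Option (Fin n)) : Finset (Fin n) := {x | ∃ a, f a = some x}

theorem card_ran {f : Fin n → Option (Fin n)} (hf : IsPartialInj f) : #(ran f) = #(dom f) := by
  refine (card_bij (fun a ha => (f a).get (by simpa [dom] using ha)) (fun a _ => ?_)
    (fun a _ b _ hab => hf a b _ (Option.some_get _).symm (by rw [hab, Option.some_get]))
    (fun x hx => ?_)).symm
  · simp [ran]
  · obtain ⟨a, ha⟩ : ∃ a, f a = some x := by simpa [ran] using hx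
    exact ⟨a, by simp [dom, ha], by simp [ha]⟩

def partialOrderIso (D R : Finset (Fin n)) (h : #R = #D) : Fin n → Option (Fin n) :=
  fun a => if ha : a ∈ D then some (R.orderEmbOfFin h ((D.orderIsoOfFin rfl).symm ⟨a, ha⟩))
    else none

variable {D R : Finset (Fin n)} {h : #R = #D}

theorem partialOrderIso_orderEmbOfFin (i : Fin #D) :
    partialOrderIso D R h (D.orderEmbOfFin rfl i) = some (R.orderEmbOfFin h i) := by
  rw [partialOrderIso, dif_pos (orderEmbOfFin_mem D rfl i)]
  congr
  exact (D.orderIsoOfFin rfl).symm_apply_apply i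

theorem partialOrderIso_eq_some_iff {a x : Fin n} : partialOrderIso D R h a = some x ↔
    ∃ i, D.orderEmbOfFin rfl i = a ∧ R.orderEmbOfFin h i = x := by
  refine ⟨fun hax => ?_, fun ⟨i, hi, hx⟩ => hi ▸ hx ▸ partialOrderIso_orderEmbOfFin i⟩
  have ha : a ∈ D := by
    by_contra ha
    simp [partialOrderIso, ha] at hax
  obtain ⟨i, rfl⟩ : a ∈ Set.range (D.orderEmbOfFin rfl) := by simpa using ha
  exact ⟨i, rfl, Option.some_injective _ ((partialOrderIso_orderEmbOfFin i).symm.trans hax)⟩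

theorem dom_partialOrderIso : dom (partialOrderIso D R h) = D := by
  ext a
  by_cases ha : a ∈ D <;> simp [dom, partialOrderIso, ha]

theorem ran_partialOrderIso : ran (partialOrderIso D R h) = R := by
  ext x
  simp only [ran, mem_filter, mem_univ, true_and, partialOrderIso_eq_some_iff]
  constructor
  · rintro ⟨a, i, -, rfl⟩
    exact orderEmbOfFin_mem R h i
  · intro hx
    obtain ⟨i, rfl⟩ : x ∈ Set.range (R.orderEmbOfFin h) := by simpa using hx
    exact ⟨_, i, rfl, rfl⟩

theorem partialOrderIso_mem_Bn_iff : partialOrderIso D R h ∈ Bn n ↔ GaleLE R D := by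
  have hinj : IsPartialInj (partialOrderIso D R h) := by
    intro a b x hax hbx
    obtain ⟨i, rfl, rfl⟩ := partialOrderIso_eq_some_iff.mp hax
    obtain ⟨j, rfl, hj⟩ := partialOrderIso_eq_some_iff.mp hbx
    rw [(R.orderEmbOfFin h).injective hj]
  have hpres : IsOrderPres (partialOrderIso D R h) := by
    intro a b x y hab hax hby
    obtain ⟨i, rfl, rfl⟩ := partialOrderIso_eq_some_iff.mp hax
    obtain ⟨j, rfl, rfl⟩ := partialOrderIso_eq_some_iff.mp hby
    exact (R.orderEmbOfFin h).lt_iff_lt.mpr ((D.orderEmbOfFin rfl).lt_iff_lt.mp hab)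
  rw [galeLE_iff_orderEmbOfFin_le h rfl]
  refine ⟨fun ⟨_, _, hdec⟩ i => hdec _ _ (partialOrderIso_orderEmbOfFin i), fun hle => ?_⟩
  refine ⟨hinj, hpres, fun a x hax => ?_⟩
  obtain ⟨i, rfl, rfl⟩ := partialOrderIso_eq_some_iff.mp hax
  exact hle i

theorem eq_partialOrderIso {f : Fin n → Option (Fin n)} (hf : f ∈ Bn n) :
    f = partialOrderIso (dom f) (ran f) (card_ran hf.1) := by
  set D := dom f
  have hD : ∀ i, (f (D.orderEmbOfFin rfl i)).isSome := fun i => by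
    simpa [D, dom] using orderEmbOfFin_mem D rfl i
  set g : Fin #D → Fin n := fun i => (f (D.orderEmbOfFin rfl i)).get (hD i)
  have hfg : ∀ i, f (D.orderEmbOfFin rfl i) = some (g i) := fun i => (Option.some_get _).symm
  have hg : g = (ran f).orderEmbOfFin (card_ran hf.1) :=
    orderEmbOfFin_unique _ (fun i => by simpa [ran] using ⟨_, hfg i⟩)
      (fun i j hij => hf.2.1 _ _ _ _ ((D.orderEmbOfFin rfl).strictMono hij) (hfg i) (hfg j))
  funext a
  by_cases ha : a ∈ D
  · obtain ⟨i, rfl⟩ : a ∈ Set.range (D.orderEmbOfFin rfl) := by simpa using ha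
    rw [partialOrderIso_orderEmbOfFin, hfg, hg]
  · rw [partialOrderIso, dif_neg ha]
    simpa [D, dom] using ha

def equivGalePairs (n : ℕ) : Bn n ≃ {p : Finset (Fin n) × Finset (Fin n) // GaleLE p.2 p.1} where
  toFun f := ⟨(dom f.1, ran f.1), partialOrderIso_mem_Bn_iff.mp (eq_partialOrderIso f.2 ▸ f.2)⟩
  invFun p := ⟨partialOrderIso p.1.1 p.1.2 p.2.1, partialOrderIso_mem_Bn_iff.mpr p.2⟩
  left_inv f := Subtype.ext (eq_partialOrderIso f.2).symm
  right_inv _ := Subtype.ext (Prod.ext dom_partialOrderIso ran_partialOrderIso)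

end Bn

theorem sum_filter_le_eq_sum_range {M : Type*} [AddCommMonoid M] {m : ℕ} (g : ℕ → M)
    (l : Fin m) : ∑ i ∈ {i : Fin m | i ≤ l}, g i = ∑ i ∈ range (l + 1), g i := by
  rw [filter_ge_eq_Iic, Nat.range_succ_eq_Iic, ← Fin.map_valEmbedding_Iic, sum_map]
  rfl

theorem sum_eq_two_mul_card_sub {ι : Type*} [Fintype ι] {b : ι → ℤ}
    (hb : ∀ i, b i = 1 ∨ b i = -1) : ∑ i, b i = 2 * #{i | b i = 1} - Fintype.card ι := by
  have hb' : ∀ i, b i = 2 * (if b i = 1 then 1 else 0) - 1 := fun i => by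
    rcases hb i with h | h <;> simp [h]
  rw [sum_congr rfl fun i _ => hb' i, sum_sub_distrib, ← mul_sum, sum_boole]
  simp

theorem mem_CSeq_iff {m : ℕ} {g : ℕ → ℤ} (hg : ∀ i, g i = 1 ∨ g i = -1) :
    (fun i : Fin (2 * m) => g i) ∈ CSeq m ↔
      ∑ i ∈ range (2 * m), g i = 0 ∧ ∀ N ≤ 2 * m, 0 ≤ ∑ i ∈ range N, g i := by
  have hcard : #{i : Fin (2 * m) | g i = 1} = m ↔ ∑ i ∈ range (2 * m), g i = 0 := by
    rw [← Fin.sum_univ_eq_sum_range, sum_eq_two_mul_card_sub (b := fun i : Fin (2 * m) => g i) fun i => hg i,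
      Fintype.card_fin]
    omega
  simp only [CSeq, Set.mem_ofPred_eq, hcard, sum_filter_le_eq_sum_range]
  refine ⟨fun ⟨_, htot, h⟩ => ⟨htot, fun N hN => ?_⟩,
    fun ⟨htot, h⟩ => ⟨fun i => hg i, htot, fun l => h _ l.2⟩⟩
  rcases N with _ | N
  · simp
  · exact h ⟨N, hN⟩

theorem CSeq.apply_zero {m : ℕ} {a : Fin (2 * (m + 1)) → ℤ} (ha : a ∈ CSeq (m + 1)) :
    a ⟨0, by omega⟩ = 1 := by
  have h0 := ha.2.2 ⟨0, by omega⟩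
  rw [show ({i | i ≤ ⟨0, _⟩} : Finset (Fin (2 * (m + 1)))) = {⟨0, by omega⟩} by
    ext i
    simp only [mem_filter, mem_univ, true_and, mem_singleton, Fin.ext_iff, Fin.le_def]
    omega, sum_singleton] at h0
  rcases ha.1 ⟨0, by omega⟩ with h | h
  · exact h
  · omega

theorem CSeq.apply_last {m : ℕ} {a : Fin (2 * (m + 1)) → ℤ} (ha : a ∈ CSeq (m + 1)) :
    a ⟨2 * m + 1, by omega⟩ = -1 := by
  have htot : ∑ i, a i = 0 := by
    rw [sum_eq_two_mul_card_sub ha.1, ha.2.1, Fintype.card_fin]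
    push_cast
    ring
  have h0 := ha.2.2 ⟨2 * m, by omega⟩
  rw [show ({i | i ≤ ⟨2 * m, _⟩} : Finset (Fin (2 * (m + 1)))) = univ.erase ⟨2 * m + 1, by omega⟩ by
    ext i
    simp only [mem_filter, mem_univ, true_and, mem_erase, ne_eq, and_true, Fin.ext_iff, Fin.le_def]
    omega, sum_erase_eq_sub (mem_univ _), htot] at h0
  rcases ha.1 ⟨2 * m + 1, by omega⟩ with h | h
  · omega
  · exact h

def ballotSeq (D R : Finset ℕ) : ℕ → ℤ
  | 0 => 1
  | i + 1 => if i % 2 = 0 then (if i / 2 ∈ R then 1 else -1) else (if i / 2 ∈ D then -1 else 1)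

section ballotSeq

variable {D R : Finset ℕ}

theorem ballotSeq_odd (j : ℕ) : ballotSeq D R (2 * j + 1) = if j ∈ R then 1 else -1 := by
  simp [ballotSeq]

theorem ballotSeq_even (j : ℕ) : ballotSeq D R (2 * j + 2) = if j ∈ D then -1 else 1 := by
  simp only [ballotSeq, show (2 * j + 1) % 2 ≠ 0 by omega, show (2 * j + 1) / 2 = j by omega,
    if_false]

theorem ballotSeq_eq_one_or (i : ℕ) : ballotSeq D R i = 1 ∨ ballotSeq D R i = -1 := by
  rcases i with _ | i
  · exact Or.inl rfl
  · simp only [ballotSeq]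
    split_ifs <;> simp

theorem card_filter_lt_add_one (S : Finset ℕ) (j : ℕ) :
    #{a ∈ S | a < j + 1} = #{a ∈ S | a < j} + if j ∈ S then 1 else 0 := by
  rw [show {a ∈ S | a < j + 1} = {a ∈ S | a < j ∨ a = j} by simp only [Nat.lt_succ_iff_lt_or_eq],
    filter_or,
    card_union_of_disjoint (disjoint_filter.2 fun _ _ h1 h2 => by omega), filter_eq']
  split_ifs <;> simp

theorem sum_range_ballotSeq_odd (j : ℕ) : ∑ i ∈ range (2 * j + 1), ballotSeq D R i =
    1 + 2 * #{a ∈ R | a < j} - 2 * #{a ∈ D | a < j} := by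
  induction j with
  | zero => simp [ballotSeq]
  | succ j ih =>
    rw [show 2 * (j + 1) + 1 = 2 * j + 1 + 1 + 1 by ring, sum_range_succ, sum_range_succ, ih,
      ballotSeq_odd, ballotSeq_even, card_filter_lt_add_one, card_filter_lt_add_one]
    split_ifs <;> push_cast <;> ring

theorem sum_range_ballotSeq_nonneg_iff {m : ℕ} :
    (∀ N ≤ 2 * m, 0 ≤ ∑ i ∈ range N, ballotSeq D R i) ↔
      ∀ j < m, #{a ∈ D | a < j} ≤ #{a ∈ R | a < j} := by
  refine ⟨fun h j hj => ?_, fun h N hN => ?_⟩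
  · have := h (2 * j + 1) (by omega)
    rw [sum_range_ballotSeq_odd] at this
    omega
  obtain ⟨j, rfl | rfl⟩ := N.even_or_odd'
  · rcases j with _ | j
    · simp
    rw [show 2 * (j + 1) = 2 * j + 1 + 1 by ring, sum_range_succ, sum_range_ballotSeq_odd]
    have := h j (by omega)
    rcases ballotSeq_eq_one_or (D := D) (R := R) (2 * j + 1) with h' | h' <;> rw [h'] <;> omega
  · rw [sum_range_ballotSeq_odd]
    have := h j (by omega)
    omega

theorem sum_range_ballotSeq_eq {n : ℕ} (hD : ∀ a ∈ D, a < n) (hR : ∀ a ∈ R, a < n) :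
    ∑ i ∈ range (2 * (n + 1)), ballotSeq D R i = 2 * #R - 2 * #D := by
  rw [show 2 * (n + 1) = 2 * n + 1 + 1 by ring, sum_range_succ, sum_range_ballotSeq_odd,
    ballotSeq_odd, if_neg fun h => (hR n h).false, filter_true_of_mem hD,
    filter_true_of_mem hR]
  ring

theorem ballotSeq_mem_CSeq_iff {n : ℕ} (hD : ∀ a ∈ D, a < n) (hR : ∀ a ∈ R, a < n) :
    (fun i : Fin (2 * (n + 1)) => ballotSeq D R i) ∈ CSeq (n + 1) ↔ GaleLE R D := by
  rw [mem_CSeq_iff ballotSeq_eq_one_or, sum_range_ballotSeq_nonneg_iff,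
    sum_range_ballotSeq_eq hD hR, GaleLE]
  refine ⟨fun ⟨htot, h⟩ => ⟨by omega, fun j => ?_⟩, fun ⟨hc, h⟩ => ⟨by omega, fun j _ => h j⟩⟩
  rcases lt_or_ge j (n + 1) with hj | hj
  · exact h j hj
  rw [filter_true_of_mem fun a ha => (hD a ha).trans_le (by omega),
    filter_true_of_mem fun a ha => (hR a ha).trans_le (by omega)]
  omega

end ballotSeq

section ballotWord

variable {n : ℕ}

-- The last letter is `r_n = -1`, since `n ∉ R`.
def ballotWord (D R : Finset (Fin n)) : Fin (2 * (n + 1)) → ℤ := fun i =>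
  ballotSeq (D.map (Fin.valOrderEmb n).toEmbedding) (R.map (Fin.valOrderEmb n).toEmbedding) i

def wordDom (a : Fin (2 * (n + 1)) → ℤ) : Finset (Fin n) :=
  {j | a ⟨2 * j + 2, by omega⟩ = -1}

def wordRan (a : Fin (2 * (n + 1)) → ℤ) : Finset (Fin n) :=
  {j | a ⟨2 * j + 1, by omega⟩ = 1}

theorem val_mem_map_valOrderEmb {S : Finset (Fin n)} (x : Fin n) :
    (x : ℕ) ∈ S.map (Fin.valOrderEmb n).toEmbedding ↔ x ∈ S :=
  mem_map' _

theorem ballotWord_mem_CSeq_iff {D R : Finset (Fin n)} :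
    ballotWord D R ∈ CSeq (n + 1) ↔ GaleLE R D :=
  (ballotSeq_mem_CSeq_iff (by simp) (by simp)).trans (galeLE_map_iff _)

theorem wordDom_ballotWord (D R : Finset (Fin n)) : wordDom (ballotWord D R) = D := by
  ext j
  simp only [wordDom, ballotWord, mem_filter, mem_univ, true_and, ballotSeq_even,
    val_mem_map_valOrderEmb]
  split_ifs with h <;> simp [h]

theorem wordRan_ballotWord (D R : Finset (Fin n)) : wordRan (ballotWord D R) = R := by
  ext j
  simp only [wordRan, ballotWord, mem_filter, mem_univ, true_and, ballotSeq_odd,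
    val_mem_map_valOrderEmb]
  split_ifs with h <;> simp [h]

theorem ballotWord_wordDom_wordRan {a : Fin (2 * (n + 1)) → ℤ} (ha : a ∈ CSeq (n + 1)) :
    ballotWord (wordDom a) (wordRan a) = a := by
  funext ⟨i, hi⟩
  obtain ⟨k, rfl | rfl⟩ := i.even_or_odd'
  · rcases k with _ | j
    · exact (CSeq.apply_zero ha).symm
    let x : Fin n := ⟨j, by omega⟩
    change ballotSeq _ _ (2 * x + 2) = a ⟨2 * x + 2, hi⟩
    simp only [ballotSeq_even, val_mem_map_valOrderEmb, wordDom, mem_filter, mem_univ, true_and]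
    rcases ha.1 ⟨2 * x + 2, hi⟩ with h | h <;> simp [h]
  · rcases (show k < n ∨ k = n by omega) with hk | rfl
    · let x : Fin n := ⟨k, hk⟩
      change ballotSeq _ _ (2 * x + 1) = a ⟨2 * x + 1, hi⟩
      simp only [ballotSeq_odd, val_mem_map_valOrderEmb, wordRan, mem_filter, mem_univ, true_and]
      rcases ha.1 ⟨2 * x + 1, hi⟩ with h | h <;> simp [h]
    · have hk : k ∉ (wordRan a).map (Fin.valOrderEmb k).toEmbedding := fun h => by
        obtain ⟨x, -, hx⟩ := mem_map.mp h
        exact x.isLt.ne hx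
      rw [ballotWord, ballotSeq_odd, if_neg hk, CSeq.apply_last ha]

def galePairsEquivCSeq (n : ℕ) :
    {p : Finset (Fin n) × Finset (Fin n) // GaleLE p.2 p.1} ≃ CSeq (n + 1) where
  toFun p := ⟨ballotWord p.1.1 p.1.2, ballotWord_mem_CSeq_iff.mpr p.2⟩
  invFun a := ⟨(wordDom a.1, wordRan a.1),
    ballotWord_mem_CSeq_iff.mp ((ballotWord_wordDom_wordRan a.2).symm ▸ a.2)⟩
  left_inv _ := Subtype.ext (Prod.ext (wordDom_ballotWord ..) (wordRan_ballotWord ..))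
  right_inv a := Subtype.ext (ballotWord_wordDom_wordRan a.2)

end ballotWord

/-- There is a bijection between `B_n` and `C_{n+1}`. -/
theorem Bn_equiv_CSeq (n : ℕ) : Nonempty (Bn n ≃ CSeq (n + 1)) :=
  ⟨(Bn.equivGalePairs n).trans (galePairsEquivCSeq n)⟩
end

section
/- For k-subsets S, T of {1,...,n}, the intersection of the cyclic modules B_n·v_S and B_n·v_T equals B_n·v_{S∧T}, where S∧T = {min(s_1,t_1), ..., min(s_k,t_k)} is the greatest lower bound of S and T. -/
open Finset

/-- domain of the partial map. -/
def domf {n : ℕ} (f : Fin n → Option (Fin n)) : Finset (Fin n) :=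
  Finset.univ.filter (fun a => (f a).isSome)

/-- image of a finite set under the partial map. -/
def fimg {n : ℕ} (f : Fin n → Option (Fin n)) (S : Finset (Fin n)) : Finset (Fin n) :=
  S.biUnion (fun a => (f a).toFinset)

/-- the linear action of a partial map `f` on `V = ⊕_{S ⊆ n} F·v_S`:
`f · v_S = v_{f(S)}` if `S ⊆ D(f)`, and `0` otherwise. -/
noncomputable def actMap (F : Type*) [Field F] {n : ℕ} (f : Fin n → Option (Fin n)) :
    (Finset (Fin n) →₀ F) →ₗ[F] (Finset (Fin n) →₀ F) :=
  Finsupp.lsum F (fun S => if S ⊆ domf f then Finsupp.lsingle (fimg f S) else 0)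

/-- a subspace `W` of `V` is a `B_n`-submodule if it is invariant under the action. -/
def IsBnSub {n : ℕ} {F : Type*} [Field F] (W : Submodule F (Finset (Fin n) →₀ F)) : Prop :=
  ∀ f ∈ Bn n, ∀ v ∈ W, actMap F f v ∈ W

/-- the `B_n`-submodule of `V` generated by a vector `v`. -/
noncomputable def genMod (F : Type*) [Field F] {n : ℕ} (v : Finset (Fin n) →₀ F) :
    Submodule F (Finset (Fin n) →₀ F) :=
  sInf {W | IsBnSub W ∧ v ∈ W}

/-- the componentwise partial order on subsets of `{1,…,n}`: `T ≤ S` iff `|T| = |S|`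
and `t_i ≤ s_i` for all `i` where both are listed increasingly. -/
def subLE {n : ℕ} (T S : Finset (Fin n)) : Prop :=
  T.card = S.card ∧ ∀ (i : ℕ) (hT : i < T.card) (hS : i < S.card),
    ((T.orderIsoOfFin rfl ⟨i, hT⟩ : T) : Fin n) ≤ ((S.orderIsoOfFin rfl ⟨i, hS⟩ : S) : Fin n)

/-- the greatest lower bound `S ∧ T = {min(s_1,t_1), …, min(s_k,t_k)}` of two `k`-subsets. -/
def meetSet {n : ℕ} (k : ℕ) (S T : Finset (Fin n)) (hS : S.card = k) (hT : T.card = k) :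
    Finset (Fin n) :=
  Finset.image (fun i : Fin k =>
    min ((S.orderIsoOfFin hS i : S) : Fin n) ((T.orderIsoOfFin hT i : T) : Fin n)) Finset.univ

section AuxLemmas

open Finset Finsupp

variable {n k : ℕ}

lemma coe_iso_eq_emb (U : Finset (Fin n)) (hU : U.card = k) (i : ℕ) (h1 : i < k)
    (h2 : i < U.card) :
    ((U.orderIsoOfFin rfl ⟨i, h2⟩ : U) : Fin n) = U.orderEmbOfFin hU ⟨i, h1⟩ := by
  subst hU
  exact Finset.coe_orderIsoOfFin_apply U rfl ⟨i, h2⟩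

lemma subLE_iff (U S : Finset (Fin n)) (hU : U.card = k) (hS : S.card = k) :
    subLE U S ↔ ∀ i : Fin k, U.orderEmbOfFin hU i ≤ S.orderEmbOfFin hS i := by
  constructor
  · rintro ⟨hc, h⟩ i
    have h2 : (i : ℕ) < U.card := hU ▸ i.2
    have h3 : (i : ℕ) < S.card := hS ▸ i.2
    have e1 := coe_iso_eq_emb U hU i i.2 h2
    have e2 := coe_iso_eq_emb S hS i i.2 h3
    rw [Fin.eta] at e1 e2
    rw [← e1, ← e2]
    exact h i h2 h3
  · intro h
    refine ⟨hU.trans hS.symm, fun i hTi hSi => ?_⟩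
    have h1 : i < k := hU ▸ hTi
    rw [coe_iso_eq_emb U hU i h1 hTi, coe_iso_eq_emb S hS i h1 hSi]
    exact h ⟨i, h1⟩

lemma subLE_refl (S : Finset (Fin n)) : subLE S S :=
  ⟨rfl, fun _ _ _ => le_refl _⟩

lemma subLE_trans {U V W : Finset (Fin n)} (h1 : subLE U V) (h2 : subLE V W) : subLE U W :=
  ⟨h1.1.trans h2.1, fun i hU hW =>
    le_trans (h1.2 i hU (h1.1 ▸ hU)) (h2.2 i (h1.1 ▸ hU) hW)⟩

lemma mem_fimg {f : Fin n → Option (Fin n)} {U : Finset (Fin n)} {x : Fin n} :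
    x ∈ fimg f U ↔ ∃ a ∈ U, f a = some x := by
  simp [fimg, Finset.mem_biUnion, Option.mem_toFinset, Option.mem_def]

lemma fimg_subLE {f : Fin n → Option (Fin n)} (hf : f ∈ Bn n) {U : Finset (Fin n)}
    (hUd : U ⊆ domf f) : subLE (fimg f U) U := by
  obtain ⟨hinj, hpres, hdec⟩ := hf
  set e := U.orderEmbOfFin (rfl : U.card = U.card) with he
  have hmemU : ∀ i, e i ∈ U := fun i => U.orderEmbOfFin_mem rfl i
  have hsome : ∀ i : Fin U.card, ((f (e i)).isSome) := by
    intro i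
    have := hUd (hmemU i)
    simpa [domf] using this
  set g : Fin U.card → Fin n := fun i => (f (e i)).get (hsome i) with hg
  have hgs : ∀ i, f (e i) = some (g i) := fun i => (Option.some_get (hsome i)).symm
  have hgmono : StrictMono g := by
    intro i j hij
    exact hpres (e i) (e j) (g i) (g j) (e.strictMono hij) (hgs i) (hgs j)
  have himg : fimg f U = Finset.image g Finset.univ := by
    ext x
    rw [mem_fimg, Finset.mem_image]
    constructor
    · rintro ⟨a, haU, hax⟩
      have : a ∈ Set.range e := by rw [Finset.range_orderEmbOfFin]; exact haU
      obtain ⟨i, rfl⟩ := this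
      exact ⟨i, Finset.mem_univ i, Option.some_injective _ ((hgs i).symm.trans hax)⟩
    · rintro ⟨i, -, rfl⟩
      exact ⟨e i, hmemU i, hgs i⟩
  have hcard : (fimg f U).card = U.card := by
    rw [himg, Finset.card_image_of_injective _ hgmono.injective, Finset.card_univ,
      Fintype.card_fin]
  rw [subLE_iff (fimg f U) U hcard rfl]
  have hgeq : g = (fimg f U).orderEmbOfFin hcard := by
    apply Finset.orderEmbOfFin_unique hcard _ hgmono
    intro i
    rw [himg]
    exact Finset.mem_image.mpr ⟨i, Finset.mem_univ i, rfl⟩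
  intro i
  rw [← hgeq]
  exact hdec (e i) (g i) (hgs i)

lemma exists_map (U S : Finset (Fin n)) (h : subLE U S) :
    ∃ f ∈ Bn n, S ⊆ domf f ∧ fimg f S = U := by
  have hU : U.card = S.card := h.1
  set eS := S.orderIsoOfFin (rfl : S.card = S.card) with heS
  set eU := U.orderEmbOfFin hU with heU
  classical
  refine ⟨fun a => if ha : a ∈ S then some (eU (eS.symm ⟨a, ha⟩)) else none, ?_, ?_, ?_⟩
  · refine ⟨?_, ?_, ?_⟩
    · intro a b x hax hbx
      beta_reduce at hax hbx
      by_cases ha : a ∈ S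
      · by_cases hb : b ∈ S
        · rw [dif_pos ha] at hax; rw [dif_pos hb] at hbx
          have hx := Option.some_injective _ (hax.trans hbx.symm)
          have := eS.symm.injective (eU.injective hx)
          exact congrArg Subtype.val this
        · rw [dif_neg hb] at hbx; exact absurd hbx (by simp)
      · rw [dif_neg ha] at hax; exact absurd hax (by simp)
    · intro a b x y hab hax hbx
      beta_reduce at hax hbx
      by_cases ha : a ∈ S
      · by_cases hb : b ∈ S
        · rw [dif_pos ha] at hax; rw [dif_pos hb] at hbx
          obtain rfl := Option.some_injective _ hax.symm
          obtain rfl := Option.some_injective _ hbx.symm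
          exact eU.strictMono (eS.symm.strictMono (show (⟨a, ha⟩ : S) < ⟨b, hb⟩ from hab))
        · rw [dif_neg hb] at hbx; exact absurd hbx (by simp)
      · rw [dif_neg ha] at hax; exact absurd hax (by simp)
    · intro a x hax
      beta_reduce at hax
      by_cases ha : a ∈ S
      · rw [dif_pos ha] at hax
        obtain rfl := Option.some_injective _ hax.symm
        set i := eS.symm ⟨a, ha⟩ with hi
        have hai : a = ((eS i : S) : Fin n) := by rw [hi, OrderIso.apply_symm_apply]
        have h1 : eU i ≤ S.orderEmbOfFin rfl i := (subLE_iff U S hU rfl).mp h i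
        rw [hai, Finset.coe_orderIsoOfFin_apply]
        exact h1
      · rw [dif_neg ha] at hax; exact absurd hax (by simp)
  · intro a ha
    simp only [domf, Finset.mem_filter, Finset.mem_univ, true_and]
    rw [dif_pos ha]
    rfl
  · ext x
    rw [mem_fimg]
    constructor
    · rintro ⟨a, haS, hax⟩
      rw [dif_pos haS] at hax
      obtain rfl := Option.some_injective _ hax.symm
      exact U.orderEmbOfFin_mem hU _
    · intro hx
      have : x ∈ Set.range eU := by rw [heU, Finset.range_orderEmbOfFin]; exact hx
      obtain ⟨i, rfl⟩ := this
      refine ⟨((eS i : S) : Fin n), (eS i).2, ?_⟩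
      beta_reduce
      rw [dif_pos (eS i).2]
      congr 1
      congr 1
      rw [Subtype.coe_eta, OrderIso.symm_apply_apply]

lemma actMap_single (F : Type*) [Field F] (f : Fin n → Option (Fin n)) (S : Finset (Fin n))
    (c : F) :
    actMap F f (Finsupp.single S c) =
      if S ⊆ domf f then Finsupp.single (fimg f S) c else 0 := by
  rw [actMap, Finsupp.lsum_single]
  split_ifs with h <;> simp

lemma mem_genMod_self {F : Type*} [Field F] (v : Finset (Fin n) →₀ F) : v ∈ genMod F v :=
  Submodule.mem_sInf.mpr fun _ hW => hW.2

lemma isBnSub_genMod {F : Type*} [Field F] (v : Finset (Fin n) →₀ F) :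
    IsBnSub (genMod F v) := fun f hf w hw =>
  Submodule.mem_sInf.mpr fun W hW => hW.1 f hf w (Submodule.mem_sInf.mp hw W hW)

lemma genMod_le {F : Type*} [Field F] {v : Finset (Fin n) →₀ F}
    {W : Submodule F (Finset (Fin n) →₀ F)} (h1 : IsBnSub W) (h2 : v ∈ W) :
    genMod F v ≤ W := sInf_le ⟨h1, h2⟩

lemma isBnSub_supported (F : Type*) [Field F] (S : Finset (Fin n)) :
    IsBnSub (Finsupp.supported F F {U : Finset (Fin n) | subLE U S}) := by
  intro f hf v hv
  rw [Finsupp.mem_supported] at hv ⊢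
  intro U hU
  rw [Finset.mem_coe] at hU
  rw [actMap, Finsupp.lsum_apply] at hU
  have hU' := Finsupp.support_sum hU
  obtain ⟨A, hA, hUA⟩ := Finset.mem_biUnion.mp hU'
  by_cases hAd : A ⊆ domf f
  · rw [if_pos hAd] at hUA
    simp only [Finsupp.lsingle_apply] at hUA
    have := Finsupp.support_single_subset hUA
    rw [Finset.mem_singleton] at this
    subst this
    exact subLE_trans (fimg_subLE hf hAd) (hv (Finset.mem_coe.mpr hA))
  · rw [if_neg hAd] at hUA
    simp at hUA

lemma genMod_single_eq (F : Type*) [Field F] (S : Finset (Fin n)) :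
    genMod F (Finsupp.single S (1 : F)) =
      Finsupp.supported F F {U : Finset (Fin n) | subLE U S} := by
  apply le_antisymm
  · refine genMod_le (isBnSub_supported F S) ?_
    rw [Finsupp.mem_supported]
    intro U hU
    rw [Finset.mem_coe] at hU
    have := Finsupp.support_single_subset hU
    rw [Finset.mem_singleton] at this
    subst this
    exact subLE_refl _
  · rw [Finsupp.supported_eq_span_single, Submodule.span_le]
    rintro _ ⟨U, hU, rfl⟩
    obtain ⟨f, hf, hSd, hfS⟩ := exists_map U S hU
    have hmem := isBnSub_genMod (Finsupp.single S (1 : F)) f hf _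
      (mem_genMod_self (Finsupp.single S (1 : F)))
    rwa [actMap_single, if_pos hSd, hfS] at hmem

end AuxLemmas

section MeetLemmas
open Finset

lemma meetSet_props {n k : ℕ} (S T : Finset (Fin n)) (hS : S.card = k) (hT : T.card = k) :
    ∃ hc : (meetSet k S T hS hT).card = k,
      ∀ i : Fin k, (meetSet k S T hS hT).orderEmbOfFin hc i =
        min (S.orderEmbOfFin hS i) (T.orderEmbOfFin hT i) := by
  set m : Fin k → Fin n := fun i => min (S.orderEmbOfFin hS i) (T.orderEmbOfFin hT i) with hm
  have hmono : StrictMono m := by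
    intro i j hij
    exact lt_min ((min_le_left _ _).trans_lt ((S.orderEmbOfFin hS).strictMono hij))
      ((min_le_right _ _).trans_lt ((T.orderEmbOfFin hT).strictMono hij))
  have hms : meetSet k S T hS hT = Finset.image m Finset.univ := rfl
  have hc : (meetSet k S T hS hT).card = k := by
    rw [hms, Finset.card_image_of_injective _ hmono.injective, Finset.card_univ,
      Fintype.card_fin]
  refine ⟨hc, fun i => ?_⟩
  have heq := Finset.orderEmbOfFin_unique hc (f := m) (fun i => by
    rw [hms]; exact Finset.mem_image.mpr ⟨i, Finset.mem_univ i, rfl⟩) hmono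
  rw [← heq]

end MeetLemmas

/-- `B_n v_S ∩ B_n v_T = B_n v_{S ∧ T}` for `k`-subsets `S, T`. -/
theorem genMod_inf (n k : ℕ) (F : Type*) [Field F] [CharZero F]
    (S T : Finset (Fin n)) (hS : S.card = k) (hT : T.card = k) :
    genMod F (Finsupp.single S (1 : F)) ⊓ genMod F (Finsupp.single T (1 : F)) =
      genMod F (Finsupp.single (meetSet k S T hS hT) (1 : F)) := by
  
  obtain ⟨hc, hemb⟩ := meetSet_props S T hS hT
  rw [genMod_single_eq, genMod_single_eq, genMod_single_eq, ← Finsupp.supported_inter]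
  congr 1
  ext U
  simp only [Set.mem_inter_iff, Set.mem_setOf_eq]
  constructor
  · rintro ⟨h1, h2⟩
    have hU : U.card = k := h1.1.trans hS
    rw [subLE_iff U _ hU hc]
    intro i
    rw [hemb i]
    exact le_min ((subLE_iff U S hU hS).mp h1 i) ((subLE_iff U T hU hT).mp h2 i)
  · intro h
    have hU : U.card = k := h.1.trans hc
    have h' := (subLE_iff U _ hU hc).mp h
    constructor
    · rw [subLE_iff U S hU hS]
      intro i
      exact ((h' i).trans_eq (hemb i)).trans (min_le_left _ _)
    · rw [subLE_iff U T hU hT]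
      intro i
      exact ((h' i).trans_eq (hemb i)).trans (min_le_right _ _)
end
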